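/- If for every object X of 𝓒 there exists an element z of the abelian group P(F(X))(X) such that the component at X of the counit ε_{Y(X)} : P(F(X)) ⟶ Y(X) sends z to the identity morphism 𝟙_X ∈ 𝓒(X, X), then the Freyd functor F : 𝓒 ⥤ 𝓟𝓑 is faithful. -/

import Mathlib

open CategoryTheory Opposite

universe v u

variable (B C : Type u) [Category.{v} B] [Category.{v} C] [Preadditive B] [Preadditive C]

/-- The category of additive presheaves (of abelian groups) on a preadditive category. -/
noncomputable abbrev AddPresheaf (D : Type u) [Category.{v} D] [Preadditive D] :=
  Dᵒᵖ ⥤+ AddCommGrpCat.{v}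

/-- The restriction functor `U : 𝓟𝓒 ⥤ 𝓟𝓑` given by precomposition with `ιᵒᵖ`. -/
noncomputable def restrictU (ι : B ⥤ C) [ι.Additive] :
    AddPresheaf C ⥤ AddPresheaf B where
  obj G := ⟨ι.op ⋙ G.1, letI := G.2; (inferInstance : (ι.op ⋙ G.1).Additive)⟩
  map α := ObjectProperty.homMk (Functor.whiskerLeft ι.op α.hom)

/-- The additive Yoneda embedding `Y : 𝓒 ⥤ 𝓟𝓒`, `Y(X) = 𝓒(−, X)`. -/
noncomputable def yonedaAdd : C ⥤ AddPresheaf C where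
  obj X := ⟨preadditiveYoneda.obj X, (inferInstance : (preadditiveYoneda.obj X).Additive)⟩
  map f := ObjectProperty.homMk (preadditiveYoneda.map f)

/-- The Freyd functor `F = Y ⋙ U : 𝓒 ⥤ 𝓟𝓑`, `F(X) = 𝓒(ι(−), X)`. -/
noncomputable def freydF (ι : B ⥤ C) [ι.Additive] : C ⥤ AddPresheaf B :=
  yonedaAdd C ⋙ restrictU B C ι

/-! By Yoneda, a map `G ⟶ 𝓒(−, X)` of additive presheaves whose component at `X` hits `𝟙 X` is
an epimorphism; so the hypothesis makes the counit `ε_{Y(X)}` epi, and a right adjoint is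
injective on maps out of an object at which the counit is epi. Hence `F f = U (Y f)` determines
`Y f`, which determines `f`. -/

lemma CategoryTheory.Adjunction.map_injective_of_epi_counit_app {𝒜 𝒟 : Type*} [Category 𝒜]
    [Category 𝒟] {L : 𝒜 ⥤ 𝒟} {R : 𝒟 ⥤ 𝒜} (adj : L ⊣ R) {A A' : 𝒟}
    [Epi (adj.counit.app A)] {f g : A ⟶ A'} (h : R.map f = R.map g) : f = g := by
  rw [← cancel_epi (adj.counit.app A)]
  simpa using congrArg (fun k => L.map k ≫ adj.counit.app A') h

section

variable {C}

lemma yonedaAdd_hom_ext {X : C} {Q : AddPresheaf C} {α β : (yonedaAdd C).obj X ⟶ Q}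
    (h : α.hom.app (op X) (𝟙 X) = β.hom.app (op X) (𝟙 X)) : α = β := by
  ext W u
  have naturality (γ : (yonedaAdd C).obj X ⟶ Q) :
      γ.hom.app W u = Q.1.map u.op (γ.hom.app (op X) (𝟙 X)) := by
    have h := NatTrans.naturality_apply γ.hom u.op (𝟙 X)
    rwa [show ((yonedaAdd C).obj X).1.map u.op (𝟙 X) = u from Category.comp_id u] at h
  rw [naturality α, naturality β, h]

lemma epi_of_id_mem_range {X : C} {G : AddPresheaf C} (φ : G ⟶ (yonedaAdd C).obj X)
    {z : G.1.obj (op X)} (hz : φ.hom.app (op X) z = 𝟙 X) : Epi φ where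
  left_cancellation {Q} α β h := yonedaAdd_hom_ext <| by
    simpa [hz] using congrArg (fun γ : G ⟶ Q => γ.hom.app (op X) z) h

instance yonedaAdd_faithful : (yonedaAdd C).Faithful where
  map_injective {X Y f g} h := by
    have h' : 𝟙 X ≫ f = 𝟙 X ≫ g := congrArg (fun α => α.hom.app (op X) (𝟙 X)) h
    simpa using h'

end

theorem freyd_faithful_of_id_in_image (ι : B ⥤ C) [ι.Additive]
    (P : AddPresheaf B ⥤ AddPresheaf C) (adj : P ⊣ restrictU B C ι)
    (hε : ∀ X : C, ∃ z : (P.obj ((freydF B C ι).obj X)).1.obj (op X),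
      (adj.counit.app ((yonedaAdd C).obj X)).hom.app (op X) z = 𝟙 X) :
    (freydF B C ι).Faithful := by
  refine ⟨fun {X _} _ _ h => ?_⟩
  obtain ⟨z, hz⟩ := hε X
  have := epi_of_id_mem_range _ hz
  exact (yonedaAdd C).map_injective (adj.map_injective_of_epi_counit_app h)
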